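/- arXiv:1908.00857 — 7 statements merged into one kernel-verified Lean document; each statement's English description precedes it below -/
import Mathlib

section
/- Let p, q, r be integers with p ≠ 0, gcd(p, q) = 1, |p| ≥ q ≥ 1, r ≥ 2 and r even, and set n = qr, m = |p|·r. Assume the standard diagram of T(pr, qr) admits a nontrivial Z-coloring, i.e. there exists x ∈ ℤ^n with T_n^m(x) = x such that C(x) has at least two elements. Then the minimal number of colors of a nontrivial Z-coloring of this diagram equals four: there exists x ∈ ℤ^n with T_n^m(x) = x such that C(x) has exactly four elements, and every x ∈ ℤ^n with T_n^m(x) = x for which C(x) has at least two elements satisfies that C(x) has at least four elements. -/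
/-!
The twist map is `T x = 2 x₀ - x ∘ (· + 1)` on `ℤ^(ℤ/n)`, so its iterates have the closed
form `Tᵏ x i = (-1)ᵏ x (i + k) + 2 ∑_{j<k} (-1)ʲ x j`. For even `m` this makes `x` a fixed
point of `Tᵐ` exactly when `x` is `m`-periodic in the index and the alternating sum
`∑_{j<m} (-1)ʲ x j` vanishes. When `r = 2` the index period drops to `gcd(m, n) = 2`, and the
vanishing alternating sum then forces `x` to be constant, so this case has no nontrivial
coloring. For even `r ≥ 4` the indicator of the residues `1, 2 mod r` is a coloring with the
four colors `-2, -1, 0, 1`.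

Since `T x i + x (i + 1) = 2 x₀`, a first entry equal to the largest (or smallest) color forces
the whole vector to be constant. So along a nonconstant orbit the first entries avoid both
extreme colors, and since they are not all equal they supply two more colors.
-/

/-- The twist map `T_n : ℤ^n → ℤ^n`,
`T_n(x_1,…,x_n) = (2x_1 − x_2, 2x_1 − x_3, …, 2x_1 − x_n, x_1)` (0-indexed). -/
def twist (n : ℕ) (x : Fin n → ℤ) : Fin n → ℤ :=
  fun i => if h : (i : ℕ) + 1 < n then 2 * x ⟨0, i.pos⟩ - x ⟨(i : ℕ) + 1, h⟩ else x ⟨0, i.pos⟩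

/-- The set of colors `C(x) = { (T_n^k(x))_i : 0 ≤ k < m, 1 ≤ i ≤ n }`. -/
def colors (n m : ℕ) (x : Fin n → ℤ) : Set ℤ :=
  {c | ∃ k, k < m ∧ ∃ i : Fin n, (twist n)^[k] x i = c}

-- `Fin.CommRing` makes `Fin n` a ring, in which a natural number `j` casts to `j % n`.
open Function Finset Fin.CommRing

def orbitColors (n : ℕ) (x : Fin n → ℤ) : Set ℤ :=
  {c | ∃ k, ∃ i : Fin n, (twist n)^[k] x i = c}

section

variable {n : ℕ}

theorem isFixedPt_twist_const (v : ℤ) : IsFixedPt (twist n) (fun _ => v) := by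
  funext i
  unfold twist
  split_ifs <;> ring

theorem colors_eq_orbitColors {m : ℕ} (hm : 0 < m) {x : Fin n → ℤ}
    (hx : IsPeriodicPt (twist n) m x) : colors n m x = orbitColors n x := by
  ext c
  constructor
  · rintro ⟨k, -, i, rfl⟩
    exact ⟨k, i, rfl⟩
  · rintro ⟨k, i, rfl⟩
    exact ⟨k % m, Nat.mod_lt _ hm, i, by rw [hx.iterate_mod_apply]⟩

theorem eq_const_of_iterate_eq_const {m k : ℕ} (hm : 0 < m) {x : Fin n → ℤ} {v : ℤ}
    (hx : IsPeriodicPt (twist n) m x) (h : (twist n)^[k] x = fun _ => v) : x = fun _ => v := by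
  rw [← (hx.mul_const k).eq, ← Nat.sub_add_cancel (Nat.le_mul_of_pos_left k hm),
    iterate_add_apply, h, ((isFixedPt_twist_const v).iterate _).eq]

variable [NeZero n]

theorem orbitColors_const (v : ℤ) : orbitColors n (fun _ => v) = {v} := by
  simp [orbitColors, ((isFixedPt_twist_const v).iterate _).eq]

theorem twist_apply (x : Fin n → ℤ) (i : Fin n) : twist n x i = 2 * x 0 - x (i + 1) := by
  unfold twist
  split_ifs with h
  · congr 2
    ext
    rw [Fin.val_add, Fin.val_one', Nat.add_mod_mod, Nat.mod_eq_of_lt h]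
  · have hi : i + 1 = 0 := by
      ext
      rw [Fin.val_add, Fin.val_one', Nat.add_mod_mod, Fin.val_zero]
      have := i.isLt
      rw [show (i : ℕ) + 1 = n by omega, Nat.mod_self]
    rw [hi]
    simp only [Fin.mk_zero']
    ring

def altSum (x : Fin n → ℤ) (k : ℕ) : ℤ := ∑ j ∈ range k, (-1) ^ j * x (j : Fin n)

theorem altSum_zero (x : Fin n → ℤ) : altSum x 0 = 0 := sum_range_zero _

theorem altSum_succ (x : Fin n → ℤ) (k : ℕ) :
    altSum x (k + 1) = altSum x k + (-1) ^ k * x (k : Fin n) :=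
  sum_range_succ _ _

theorem twist_iterate_apply (x : Fin n → ℤ) (k : ℕ) (i : Fin n) :
    (twist n)^[k] x i = (-1) ^ k * x (i + (k : Fin n)) + 2 * altSum x k := by
  induction k generalizing i with
  | zero => simp [altSum_zero]
  | succ k ih =>
    rw [iterate_succ_apply', twist_apply, ih, ih, altSum_succ, zero_add,
      Nat.cast_succ, add_comm (k : Fin n) 1, ← add_assoc]
    ring

theorem eq_const_of_le_of_apply_zero_eq {y : Fin n → ℤ} {w : ℤ} (hy : ∀ i, y i ≤ w)
    (hTy : ∀ i, twist n y i ≤ w) (h0 : y 0 = w) : y = fun _ => w := by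
  funext i
  have := hTy (i - 1)
  rw [twist_apply, sub_add_cancel] at this
  linarith [hy i]

theorem eq_const_of_ge_of_apply_zero_eq {y : Fin n → ℤ} {u : ℤ} (hy : ∀ i, u ≤ y i)
    (hTy : ∀ i, u ≤ twist n y i) (h0 : y 0 = u) : y = fun _ => u := by
  funext i
  have := hTy (i - 1)
  rw [twist_apply, sub_add_cancel] at this
  linarith [hy i]

theorem eq_const_of_iterate_apply_zero_eq {x : Fin n → ℤ} {a : ℤ}
    (h : ∀ k, (twist n)^[k] x 0 = a) : x = fun _ => a := by
  have key : ∀ j : ℕ, ∀ k, (twist n)^[k] x j = a := by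
    intro j
    induction j with
    | zero => simpa using h
    | succ j ih =>
      intro k
      have := ih (k + 1)
      rw [iterate_succ_apply', twist_apply, h k] at this
      push_cast
      linarith
  funext i
  simpa using key i 0

theorem four_le_encard_orbitColors {m : ℕ} (hm : 0 < m) {x : Fin n → ℤ}
    (hx : IsPeriodicPt (twist n) m x) (hnc : ∀ v, x ≠ fun _ => v) :
    4 ≤ (orbitColors n x).encard := by
  set C := orbitColors n x
  have mem : ∀ k i, (twist n)^[k] x i ∈ C := fun k i => ⟨k, i, rfl⟩
  obtain hinf | hfin := C.infinite_or_finite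
  · simp [hinf.encard_eq]
  have hne : C.Nonempty := ⟨_, mem 0 0⟩
  obtain ⟨w, hwC, hw⟩ := C.exists_max_image id hfin hne
  obtain ⟨u, huC, hu⟩ := C.exists_min_image id hfin hne
  have hlt : ∀ k, (twist n)^[k] x 0 < w := fun k =>
    (hw _ (mem k 0)).lt_of_ne fun hk => hnc w <| eq_const_of_iterate_eq_const hm hx <|
      eq_const_of_le_of_apply_zero_eq (fun i => hw _ (mem k i))
        (fun i => by rw [← iterate_succ_apply' (twist n) k x]; exact hw _ (mem (k + 1) i)) hk
  have hgt : ∀ k, u < (twist n)^[k] x 0 := fun k =>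
    (hu _ (mem k 0)).lt_of_ne' fun hk => hnc u <| eq_const_of_iterate_eq_const hm hx <|
      eq_const_of_ge_of_apply_zero_eq (fun i => hu _ (mem k i))
        (fun i => by rw [← iterate_succ_apply' (twist n) k x]; exact hu _ (mem (k + 1) i)) hk
  obtain ⟨k, hk⟩ : ∃ k, (twist n)^[k] x 0 ≠ x 0 := by
    by_contra! h
    exact hnc _ (eq_const_of_iterate_apply_zero_eq h)
  have h0w := hlt 0
  have h0u := hgt 0
  have hkw := hlt k
  have hku := hgt k
  rw [iterate_zero_apply] at h0w h0u
  calc (4 : ℕ∞) = ({u, w, x 0, (twist n)^[k] x 0} : Set ℤ).encard := by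
        rw [Set.encard_insert_of_notMem (by simp; omega),
          Set.encard_insert_of_notMem (by simp; omega), Set.encard_pair hk.symm]
        rfl
    _ ≤ C.encard := Set.encard_le_encard <| by
        simp only [Set.insert_subset_iff, Set.singleton_subset_iff]
        exact ⟨huC, hwC, mem 0 0, mem k 0⟩

theorem isPeriodicPt_twist_iff {m : ℕ} (hm : Even m) (x : Fin n → ℤ) :
    IsPeriodicPt (twist n) m x ↔ Periodic x (m : Fin n) ∧ altSum x m = 0 := by
  have hT : ∀ i, (twist n)^[m] x i = x (i + m) + 2 * altSum x m := fun i => by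
    rw [twist_iterate_apply, hm.neg_one_pow, one_mul]
  refine ⟨fun hx => ?_, fun ⟨hper, hsum⟩ => funext fun i => by
    rw [hT, hper, hsum, mul_zero, add_zero]⟩
  have hshift : ∀ i, x (i + m) = x i - 2 * altSum x m := fun i => by
    rw [← congrFun hx i, hT]; ring
  have hsum : altSum x m = 0 := by
    have h := Equiv.sum_comp (Equiv.addRight (m : Fin n)) x
    simp only [Equiv.coe_addRight, hshift, sum_sub_distrib, sum_const, card_univ,
      Fintype.card_fin, nsmul_eq_mul, sub_eq_self] at h
    simpa [NeZero.ne n] using h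
  exact ⟨fun i => by rw [hshift, hsum, mul_zero, sub_zero], hsum⟩

theorem periodic_gcd_of_periodic {α : Type*} {x : Fin n → α} {m : ℕ}
    (hx : Periodic x (m : Fin n)) : Periodic x (Nat.gcd m n : Fin n) := by
  have h : ((Nat.gcd m n : ℕ) : Fin n) =
      (Nat.gcdA m n : Fin n) * m + (Nat.gcdB m n : Fin n) * n := by
    have := congrArg (Int.cast : ℤ → Fin n) (Nat.gcd_eq_gcd_ab m n)
    push_cast at this
    rw [this, mul_comm, mul_comm (n : Fin n)]
  rw [h, Fin.natCast_self, mul_zero, add_zero]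
  exact hx.int_mul _

theorem altSum_of_periodic_two {x : Fin n → ℤ} (hx : Periodic x 2) (s : ℕ) :
    altSum x (2 * s) = s * (x 0 - x 1) := by
  induction s with
  | zero => simp [altSum_zero]
  | succ s ih =>
    rw [show 2 * (s + 1) = 2 * s + 1 + 1 by ring, altSum_succ, altSum_succ, ih, pow_succ, pow_mul]
    have h1 : x (s * 2 + 1) = x 1 := by rw [add_comm]; exact hx.nat_mul s 1
    push_cast
    rw [mul_comm 2 (s : Fin n), hx.nat_mul_eq, h1]
    ring

theorem eq_const_of_isPeriodicPt_of_gcd_eq_two {m : ℕ} (hm : 0 < m) (hmn : Nat.gcd m n = 2)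
    {x : Fin n → ℤ} (hx : IsPeriodicPt (twist n) m x) : x = fun _ => x 0 := by
  obtain ⟨s, rfl⟩ : 2 ∣ m := hmn ▸ Nat.gcd_dvd_left m n
  obtain ⟨hper, hsum⟩ := (isPeriodicPt_twist_iff (even_two_mul s) x).1 hx
  have hper2 : Periodic x 2 := by simpa [hmn] using periodic_gcd_of_periodic hper
  have h01 : x 0 = x 1 := by
    rw [altSum_of_periodic_two hper2, mul_eq_zero, sub_eq_zero] at hsum
    exact hsum.resolve_left (by exact_mod_cast (by omega : s ≠ 0))
  funext i
  obtain ⟨t, ht | ht⟩ := Nat.even_or_odd' i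
  · rw [← Fin.cast_val_eq_self i, ht, Nat.cast_mul, mul_comm, Nat.cast_ofNat, hper2.nat_mul_eq]
  · rw [← Fin.cast_val_eq_self i, ht, Nat.cast_succ, Nat.cast_mul, mul_comm, Nat.cast_ofNat,
      add_comm, hper2.nat_mul t 1, h01]

end

def bump (r j : ℕ) : ℤ := if j % r = 1 ∨ j % r = 2 then 1 else 0

theorem bump_add_self (r j : ℕ) : bump r (j + r) = bump r j := by
  simp only [bump, Nat.add_mod_right]

theorem bump_eq_zero_or_one (r j : ℕ) : bump r j = 0 ∨ bump r j = 1 := by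
  unfold bump
  split_ifs <;> simp

section

variable {n r : ℕ} [NeZero n]

theorem bump_val_natCast (hrn : r ∣ n) (j : ℕ) : bump r (j : Fin n) = bump r j := by
  rw [Fin.val_natCast, bump, bump, Nat.mod_mod_of_dvd _ hrn]

theorem altSum_bump (hrn : r ∣ n) {k : ℕ} (hk : k ≤ r) :
    altSum (fun i : Fin n => bump r i) k = if k = 2 then -1 else 0 := by
  induction k with
  | zero => simp [altSum_zero]
  | succ k ih =>
    rw [altSum_succ, ih (by omega), bump_val_natCast hrn, bump,
      Nat.mod_eq_of_lt (by omega)]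
    rcases k with _ | _ | _ | k <;> simp

theorem isPeriodicPt_bump (hr : Even r) (hr4 : 4 ≤ r) (hrn : r ∣ n) :
    IsPeriodicPt (twist n) r (fun i : Fin n => bump r i) := by
  refine (isPeriodicPt_twist_iff hr _).2
    ⟨fun i => ?_, by rw [altSum_bump hrn le_rfl, if_neg (by omega)]⟩
  change bump r _ = bump r _
  rw [← Fin.cast_val_eq_self i, ← Nat.cast_add, bump_val_natCast hrn, bump_val_natCast hrn,
    bump_add_self]

theorem twist_iterate_bump (hrn : r ∣ n) {k : ℕ} (hk : k ≤ r) (j : ℕ) :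
    (twist n)^[k] (fun i : Fin n => bump r i) j =
      (-1) ^ k * bump r (j + k) - if k = 2 then 2 else 0 := by
  rw [twist_iterate_apply, ← Nat.cast_add, bump_val_natCast hrn, altSum_bump hrn hk]
  split_ifs <;> ring

theorem orbitColors_bump (hr : Even r) (hr4 : 4 ≤ r) (hrn : r ∣ n) :
    orbitColors n (fun i : Fin n => bump r i) = {-2, -1, 0, 1} := by
  have hr0 : 0 < r := by omega
  rw [← colors_eq_orbitColors hr0 (isPeriodicPt_bump hr hr4 hrn)]
  have bump_small : ∀ j, j < r → bump r j = if j = 1 ∨ j = 2 then 1 else 0 := fun j hj => by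
    rw [bump, Nat.mod_eq_of_lt hj]
  ext c
  constructor
  · rintro ⟨k, hk, i, rfl⟩
    rw [← Fin.cast_val_eq_self i, twist_iterate_bump hrn hk.le]
    split_ifs with hk2
    · subst hk2
      rcases bump_eq_zero_or_one r (i + 2) with hb | hb <;> simp [hb]
    · rcases neg_one_pow_eq_or ℤ k with h | h <;>
        rcases bump_eq_zero_or_one r (i + k) with hb | hb <;> simp [h, hb]
  · simp only [Set.mem_insert_iff, Set.mem_singleton_iff]
    rintro (rfl | rfl | rfl | rfl)
    · refine ⟨2, by omega, (1 : ℕ), ?_⟩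
      rw [twist_iterate_bump hrn (by omega), bump_small _ (by omega)]
      simp
    · refine ⟨1, by omega, (0 : ℕ), ?_⟩
      rw [twist_iterate_bump hrn (by omega), bump_small _ (by omega)]
      simp
    · refine ⟨0, by omega, (0 : ℕ), ?_⟩
      rw [twist_iterate_bump hrn (by omega), bump_small _ (by omega)]
      simp
    · refine ⟨0, by omega, (1 : ℕ), ?_⟩
      rw [twist_iterate_bump hrn (by omega), bump_small _ (by omega)]
      simp

end

theorem stmt_0_general (p q r : ℤ) (hp : p ≠ 0) (hgcd : Int.gcd p q = 1)
    (hq1 : 1 ≤ q) (hr2 : 2 ≤ r) (hre : Even r)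
    (n m : ℕ) (hn : (n : ℤ) = q * r) (hm : (m : ℤ) = |p| * r)
    (hex : ∃ x : Fin n → ℤ, (twist n)^[m] x = x ∧ 2 ≤ (colors n m x).encard) :
    (∃ x : Fin n → ℤ, (twist n)^[m] x = x ∧ (colors n m x).encard = 4) ∧
    (∀ x : Fin n → ℤ, (twist n)^[m] x = x → 2 ≤ (colors n m x).encard →
      4 ≤ (colors n m x).encard) := by
  lift q to ℕ using by omega
  lift r to ℕ using by omega
  rw [Int.abs_eq_natAbs] at hm
  replace hn : n = q * r := by exact_mod_cast hn
  replace hm : m = p.natAbs * r := by exact_mod_cast hm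
  replace hre : Even r := by exact_mod_cast hre
  have hm0 : 0 < m := hm ▸ Nat.mul_pos (Int.natAbs_pos.2 hp) (by omega)
  have : NeZero n := ⟨hn ▸ Nat.mul_ne_zero (by omega) (by omega)⟩
  have not_const : ∀ x : Fin n → ℤ, IsPeriodicPt (twist n) m x → 2 ≤ (colors n m x).encard →
      ∀ v, x ≠ fun _ => v := by
    rintro x hx h2 v rfl
    rw [colors_eq_orbitColors hm0 hx, orbitColors_const, Set.encard_singleton] at h2
    exact absurd h2 (by decide)
  refine ⟨?_, fun x hx h2 => ?_⟩
  · obtain rfl | hr4 : r = 2 ∨ 4 ≤ r := by obtain ⟨t, rfl⟩ := hre; omega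
    · obtain ⟨x, hx, h2⟩ := hex
      have hmn : Nat.gcd m n = 2 := by
        rw [hm, hn, Nat.gcd_mul_right, show Nat.gcd p.natAbs q = 1 from hgcd, one_mul]
      exact absurd (eq_const_of_isPeriodicPt_of_gcd_eq_two hm0 hmn hx) (not_const x hx h2 _)
    · have hx : IsPeriodicPt (twist n) m (fun i : Fin n => bump r i) := by
        rw [hm, mul_comm]; exact (isPeriodicPt_bump hre hr4 (hn ▸ dvd_mul_left r q)).mul_const _
      refine ⟨_, hx, ?_⟩
      rw [colors_eq_orbitColors hm0 hx, orbitColors_bump hre hr4 (hn ▸ dvd_mul_left r q)]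
      norm_num [Set.encard_insert_of_notMem]
  · rw [colors_eq_orbitColors hm0 hx]
    exact four_le_encard_orbitColors hm0 hx (not_const x hx h2)

theorem stmt_0 (p q r : ℤ) (hp : p ≠ 0) (hgcd : Int.gcd p q = 1)
    (hq1 : 1 ≤ q) (hqp : q ≤ |p|) (hr2 : 2 ≤ r) (hre : Even r)
    (n m : ℕ) (hn : (n : ℤ) = q * r) (hm : (m : ℤ) = |p| * r)
    (hex : ∃ x : Fin n → ℤ, (twist n)^[m] x = x ∧ 2 ≤ (colors n m x).encard) :
    (∃ x : Fin n → ℤ, (twist n)^[m] x = x ∧ (colors n m x).encard = 4) ∧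
    (∀ x : Fin n → ℤ, (twist n)^[m] x = x → 2 ≤ (colors n m x).encard →
      4 ≤ (colors n m x).encard) :=
  stmt_0_general p q r hp hgcd hq1 hr2 hre n m hn hm hex
end

section
/- Let p, q, r be integers with p ≠ 0, gcd(p, q) = 1, |p| ≥ q ≥ 1, r ≥ 2, r odd and p even, and set n = qr, m = |p|·r. Write x ∈ ℤ^n as the concatenation of q blocks b_1, …, b_q ∈ ℤ^r (so b_j = (x_{(j−1)r+1}, …, x_{jr})). Then T_n^m(x) = x if and only if b_1 = b_2 = ⋯ = b_q (with b_1 ∈ ℤ^r arbitrary). -/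
/-- The `j`-th block (of length `R`) of a vector `x ∈ ℤ^{QR}`. -/
def blk (Q R : ℕ) (x : Fin (Q * R) → ℤ) (j : Fin Q) (i : Fin R) : ℤ :=
  x ⟨(j : ℕ) * R + (i : ℕ), by
    calc (j : ℕ) * R + (i : ℕ) < (j : ℕ) * R + R := Nat.add_lt_add_left i.2 _
      _ = ((j : ℕ) + 1) * R := (Nat.succ_mul _ _).symm
      _ ≤ Q * R := Nat.mul_le_mul_right R j.2⟩

/-- `Δ(a) = a_1 − a_2 + a_3 − ⋯ + (−1)^{r+1} a_r` (0-indexed signs `(−1)^i`). -/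
def delta (R : ℕ) (a : Fin R → ℤ) : ℤ := ∑ i : Fin R, (-1 : ℤ) ^ (i : ℕ) * a i

/-!
Extend `x` periodically to `X : ℕ → ℤ`. Then `T^m` acts by `X ↦ S + (-1)^m X(· + m)`, where
`S = ∑_{j<m} 2(-1)^j X j`. For even `m` a fixed point satisfies `X(k + m) = X k - S`; as `n * m` is a
period of `X`, the drift `S` vanishes, so `X` has the periods `m` and `n`, hence `gcd(m, n) = r`,
which says that all blocks coincide. Conversely, if `X` is `r`-periodic with `r` odd, then
`j ↦ (-1)^j X j` is `r`-antiperiodic, so `S`, a sum over the even number `|p|` of blocks, is `0`.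
-/

open Finset Function

theorem Function.Periodic.nat_gcd {α : Type*} {f : ℕ → α} {a b : ℕ}
    (ha : Periodic f a) (hb : Periodic f b) : Periodic f (a.gcd b) := by
  induction a, b using Nat.gcd.induction with
  | H0 b => simpa using hb
  | H1 a b _ ih =>
    rw [Nat.gcd_rec]
    refine ih (fun k => ?_) ha
    calc f (k + b % a) = f (k + b % a + b / a * a) := (ha.nat_mul (b / a) _).symm
      _ = f (k + b) := by rw [add_assoc, Nat.mod_add_div']
      _ = f k := hb k

theorem Function.Antiperiodic.sum_range_mul_eq_zero {β : Type*} [AddCommGroup β] {f : ℕ → β}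
    {c : ℕ} (hf : Antiperiodic f c) {t : ℕ} (ht : Even t) : ∑ j ∈ range (t * c), f j = 0 := by
  obtain ⟨s, rfl⟩ := ht
  induction s with
  | zero => simp
  | succ s ih =>
    rw [show (s + 1 + (s + 1)) * c = (s + s) * c + c + c by ring, sum_range_add, sum_range_add,
      ih, zero_add, ← sum_add_distrib]
    exact sum_eq_zero fun j _ => by rw [add_right_comm, hf, add_neg_cancel]

namespace Twist

def twistSeq (X : ℕ → ℤ) (k : ℕ) : ℤ := 2 * X 0 - X (k + 1)

theorem iterate_twistSeq_apply (X : ℕ → ℤ) (m k : ℕ) :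
    twistSeq^[m] X k = ∑ j ∈ range m, 2 * (-1) ^ j * X j + (-1) ^ m * X (k + m) := by
  induction m generalizing k with
  | zero => simp
  | succ m ih =>
    rw [iterate_succ_apply', twistSeq, ih, ih, sum_range_succ]
    ring_nf

theorem periodic_of_iterate_twistSeq_eq_self {X : ℕ → ℤ} {n m : ℕ} (hn : 0 < n)
    (hX : Periodic X n) (hm : Even m) (h : twistSeq^[m] X = X) : Periodic X m := by
  set S := ∑ j ∈ range m, 2 * (-1) ^ j * X j
  have step (k : ℕ) : X (k + m) = X k - S := by
    have := congrFun h k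
    rw [iterate_twistSeq_apply, hm.neg_one_pow, one_mul] at this
    linarith
  have steps (t k : ℕ) : X (k + t * m) = X k - t * S := by
    induction t with
    | zero => simp
    | succ t ih =>
      rw [add_mul, one_mul, ← add_assoc, step, ih]
      push_cast
      ring
  have hS : S = 0 := by
    have hnm : X (n * m) = X 0 := by simpa [mul_comm] using (hX.nat_mul m).eq
    have := steps n 0
    rw [zero_add, hnm] at this
    have : (n : ℤ) * S = 0 := by linarith
    exact (mul_eq_zero.mp this).resolve_left (Nat.cast_ne_zero.mpr hn.ne')
  intro k
  rw [step, hS, sub_zero]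

theorem iterate_twistSeq_eq_self_of_periodic {X : ℕ → ℤ} {R t : ℕ} (hX : Periodic X R)
    (hR : Odd R) (ht : Even t) : twistSeq^[t * R] X = X := by
  have hanti : Antiperiodic (fun j => 2 * (-1 : ℤ) ^ j * X j) R := fun j => by
    simp only [pow_add, hR.neg_one_pow, hX j]
    ring
  funext k
  rw [iterate_twistSeq_apply, hanti.sum_range_mul_eq_zero ht, (ht.mul_right R).neg_one_pow,
    zero_add, one_mul]
  simpa using hX.nat_mul t k

section PeriodicExt

variable {n : ℕ} (hn : 0 < n)

def periodicExt (x : Fin n → ℤ) (k : ℕ) : ℤ := x ⟨k % n, Nat.mod_lt k hn⟩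

theorem periodicExt_periodic (x : Fin n → ℤ) : Periodic (periodicExt hn x) n := fun k => by
  simp [periodicExt]

theorem periodicExt_val (x : Fin n → ℤ) (i : Fin n) : periodicExt hn x i = x i := by
  simp [periodicExt, Nat.mod_eq_of_lt i.2]

theorem periodicExt_injective : Injective (periodicExt hn) := fun x y h => by
  funext i
  rw [← periodicExt_val hn x, ← periodicExt_val hn y, h]

theorem periodicExt_twist (x : Fin n → ℤ) :
    periodicExt hn (twist n x) = twistSeq (periodicExt hn x) := by
  funext k
  have hk := Nat.mod_lt k hn
  simp only [periodicExt, twist, twistSeq, Nat.zero_mod]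
  split_ifs with h
  · congr 3
    rw [← Nat.mod_add_mod, Nat.mod_eq_of_lt h]
  · have : (k + 1) % n = 0 := by
      rw [← Nat.mod_add_mod, show k % n + 1 = n by omega, Nat.mod_self]
    simp only [this]
    ring

theorem iterate_twist_eq_self_iff (x : Fin n → ℤ) (m : ℕ) :
    (twist n)^[m] x = x ↔ twistSeq^[m] (periodicExt hn x) = periodicExt hn x := by
  rw [← (Semiconj.iterate_right (periodicExt_twist hn) m x), (periodicExt_injective hn).eq_iff]

end PeriodicExt

theorem blk_eq_periodicExt {Q R : ℕ} (hn : 0 < Q * R) (x : Fin (Q * R) → ℤ) (j : Fin Q)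
    (i : Fin R) : blk Q R x j i = periodicExt hn x (j * R + i) := by
  simp only [blk, periodicExt]
  congr
  exact (Nat.mod_eq_of_lt (by nlinarith [j.2, i.2])).symm

theorem exists_blk_eq_iff_periodic {Q R : ℕ} (hn : 0 < Q * R) (x : Fin (Q * R) → ℤ) :
    (∃ a : Fin R → ℤ, ∀ j i, blk Q R x j i = a i) ↔ Periodic (periodicExt hn x) R := by
  have hR : 0 < R := Nat.pos_of_mul_pos_left hn
  constructor
  · rintro ⟨a, ha⟩
    have hX (k : ℕ) : periodicExt hn x k = a ⟨k % R, Nat.mod_lt k hR⟩ := by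
      have hj : k % (Q * R) / R < Q := (Nat.div_lt_iff_lt_mul hR).mpr (Nat.mod_lt k hn)
      have hi : k % (Q * R) % R = k % R := Nat.mod_mod_of_dvd k (dvd_mul_left R Q)
      rw [← ha ⟨_, hj⟩, blk_eq_periodicExt hn]
      simp only [← hi, Nat.div_add_mod', (periodicExt_periodic hn x).map_mod_nat]
    intro k
    simp [hX]
  · intro hX
    refine ⟨fun i => periodicExt hn x i, fun j i => ?_⟩
    rw [blk_eq_periodicExt hn, add_comm]
    simpa using hX.nat_mul j i

end Twist

open Twist in
theorem stmt_6_general (p q r : ℤ) (hgcd : Int.gcd p q = 1)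
    (hq1 : 1 ≤ q) (hro : Odd r) (hpe : Even p)
    (Q R m : ℕ) (hQ : (Q : ℤ) = q) (hR : (R : ℤ) = r) (hm : (m : ℤ) = |p| * r)
    (x : Fin (Q * R) → ℤ) :
    (twist (Q * R))^[m] x = x ↔
      ∃ a : Fin R → ℤ, ∀ (j : Fin Q) (i : Fin R), blk Q R x j i = a i := by
  have hRodd : Odd R := by rw [← Int.odd_coe_nat, hR]; exact hro
  have hn : 0 < Q * R := Nat.mul_pos (by omega) hRodd.pos
  have hmR : m = p.natAbs * R := by
    have : (m : ℤ) = (p.natAbs * R : ℕ) := by push_cast [hm, hR, Int.natCast_natAbs]; ring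
    exact_mod_cast this
  have hcop : Nat.gcd p.natAbs Q = 1 := by rw [← hQ] at hgcd; exact hgcd
  have hPeven : Even p.natAbs := Int.natAbs_even.mpr hpe
  have hper := periodicExt_periodic hn x
  rw [iterate_twist_eq_self_iff hn, exists_blk_eq_iff_periodic hn, hmR]
  constructor
  · intro h
    have := (periodic_of_iterate_twistSeq_eq_self hn hper (hPeven.mul_right R) h).nat_gcd hper
    rwa [Nat.gcd_mul_right, hcop, one_mul] at this
  · exact fun h => iterate_twistSeq_eq_self_of_periodic h hRodd hPeven

theorem stmt_6 (p q r : ℤ) (hp : p ≠ 0) (hgcd : Int.gcd p q = 1)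
    (hq1 : 1 ≤ q) (hqp : q ≤ |p|) (hr2 : 2 ≤ r) (hro : Odd r) (hpe : Even p)
    (Q R m : ℕ) (hQ : (Q : ℤ) = q) (hR : (R : ℤ) = r) (hm : (m : ℤ) = |p| * r)
    (x : Fin (Q * R) → ℤ) :
    (twist (Q * R))^[m] x = x ↔
      ∃ a : Fin R → ℤ, ∀ (j : Fin Q) (i : Fin R), blk Q R x j i = a i :=
  stmt_6_general p q r hgcd hq1 hro hpe Q R m hQ hR hm x
end

section
/- Let n ≥ 1. The operation ◁ on ℤ^n makes ℤ^n a (right) rack: for every y ∈ ℤ^n the map x ↦ x ◁ y is a bijection of ℤ^n, and (x ◁ y) ◁ z = (x ◁ z) ◁ (y ◁ z) for all x, y, z ∈ ℤ^n. -/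
/-!
In the dihedral quandle on `ℤ` (Mathlib's left convention, `b ◃ a = 2b − a`), `x ◁ y` applies to
every coordinate of `x` the composite `R_y` of the translations by `y₁, …, yₙ`. In a rack these
translations are bijective shelf automorphisms, hence so is `R_z`; and an endomorphism `f` satisfies
`f ∘ R_y = R_{f ∘ y} ∘ f`, which for `f = R_z` is the self-distributivity of `◁`.
-/

/-- The rack operation `◁` on `ℤ^n`:
`(x ◁ y)_i = (((x_i ∗ y_1) ∗ y_2) ⋯) ∗ y_n`, where `a ∗ b = 2b − a`. -/
def tri (n : ℕ) (x y : Fin n → ℤ) : Fin n → ℤ :=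
  fun i => (List.ofFn y).foldl (fun a b => 2 * b - a) (x i)

open scoped Quandles

namespace Shelf

variable {Q : Type*} [Shelf Q]

/-- `foldAct [b₁, …, bₖ] t = bₖ ◃ ⋯ ◃ b₁ ◃ t`. -/
def foldAct (l : List Q) : Q →◃ Q where
  toFun t := l.foldl (fun a b => b ◃ a) t
  map_act' := by
    induction l with
    | nil => intros; rfl
    | cons c l ih => intro x y; rw [List.foldl_cons, self_distrib]; exact ih

theorem foldAct_cons (c : Q) (l : List Q) (t : Q) : foldAct (c :: l) t = foldAct l (c ◃ t) := rfl

end Shelf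

open Shelf

theorem ShelfHom.map_foldAct {S₁ S₂ : Type*} [Shelf S₁] [Shelf S₂] (f : S₁ →◃ S₂)
    (l : List S₁) (t : S₁) : f (foldAct l t) = foldAct (l.map f) (f t) := by
  induction l generalizing t with
  | nil => rfl
  | cons c l ih => rw [List.map_cons, foldAct_cons, foldAct_cons, ih, f.map_act]

theorem Rack.bijective_foldAct {R : Type*} [Rack R] (l : List R) :
    Function.Bijective (foldAct l) := by
  induction l with
  | nil => exact Function.bijective_id
  | cons c l ih => exact ih.comp (Rack.act' c).bijective

namespace Shelf

theorem foldAct_ofFn_comp_foldAct_ofFn {Q : Type*} [Shelf Q] {n : ℕ} (x y z : Fin n → Q) :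
    foldAct (List.ofFn z) ∘ foldAct (List.ofFn y) ∘ x =
      foldAct (List.ofFn (foldAct (List.ofFn z) ∘ y)) ∘ foldAct (List.ofFn z) ∘ x := by
  rw [← List.map_ofFn]
  exact funext fun i => (foldAct (List.ofFn z)).map_foldAct (List.ofFn y) (x i)

end Shelf

theorem stmt_11_general (n : ℕ) :
    (∀ y : Fin n → ℤ, Function.Bijective (fun x : Fin n → ℤ => tri n x y)) ∧
    (∀ x y z : Fin n → ℤ, tri n (tri n x y) z = tri n (tri n x z) (tri n y z)) :=
  -- `tri n x y` is `foldAct (List.ofFn y) ∘ x` for the dihedral quandle on `ZMod 0 = ℤ`.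
  ⟨fun y => (Rack.bijective_foldAct (R := Quandle.Dihedral 0) (List.ofFn y)).comp_left,
    foldAct_ofFn_comp_foldAct_ofFn (Q := Quandle.Dihedral 0)⟩

theorem stmt_11 (n : ℕ) (hn : 1 ≤ n) :
    (∀ y : Fin n → ℤ, Function.Bijective (fun x : Fin n → ℤ => tri n x y)) ∧
    (∀ x y z : Fin n → ℤ, tri n (tri n x y) z = tri n (tri n x z) (tri n y z)) :=
  stmt_11_general n
end

section
/- Let (R, ∗) be a (right) rack and define x ∗_Q y = (x ∗̄ x) ∗ y. Then (R, ∗_Q) is a quandle: x ∗_Q x = x for all x; for every y ∈ R the map x ↦ x ∗_Q y is a bijection of R; and (x ∗_Q y) ∗_Q z = (x ∗_Q z) ∗_Q (y ∗_Q z) for all x, y, z ∈ R. -/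
/-- The associated quandle operation `x ∗_Q y = (x ∗̄ x) ∗ y` of a rack `(R, ∗)`
with inverse operation `∗̄` (`inv`). -/
def quandleOp {R : Type*} (op inv : R → R → R) : R → R → R :=
  fun x y => op (inv x x) y

/-!
The map `σ x = x ∗̄ x` commutes with every right translation, and it is inverse to the kink map
`τ x = x ∗ x`; moreover `w ∗ τ y = w ∗ y`. Hence `x ↦ x ∗_Q y = σ x ∗ y` has inverse
`z ↦ τ (z ∗̄ y)`, and right distributivity of `∗_Q` reduces to that of `∗` after pulling `σ`
through the right translations.
-/

structure IsRightRack {R : Type*} (op inv : R → R → R) : Prop where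
  inv_op : ∀ x y, inv (op x y) y = x
  op_inv : ∀ x y, op (inv x y) y = x
  right_distrib : ∀ x y z, op (op x y) z = op (op x z) (op y z)

namespace IsRightRack

variable {R : Type*} {op inv : R → R → R}

theorem bijective_op_right (h : IsRightRack op inv) (y : R) :
    Function.Bijective (fun x => op x y) :=
  Function.bijective_iff_has_inverse.mpr ⟨fun x => inv x y, (h.inv_op · y), (h.op_inv · y)⟩

theorem inv_self_op (h : IsRightRack op inv) (x y : R) :
    inv (op x y) (op x y) = op (inv x x) y := by
  have : op (op (inv x x) y) (op x y) = op x y := by rw [← h.right_distrib, h.op_inv]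
  rw [← h.inv_op (op (inv x x) y) (op x y), this]

theorem inv_self_op_self (h : IsRightRack op inv) (x : R) : inv (op x x) (op x x) = x := by
  rw [h.inv_self_op, h.op_inv]

theorem op_self_inv_self (h : IsRightRack op inv) (x : R) : op (inv x x) (inv x x) = x := by
  have : op (op (inv x x) (inv x x)) x = op x x := by rw [h.right_distrib, h.op_inv]
  rw [← h.inv_op (op (inv x x) (inv x x)) x, this, h.inv_op]

theorem op_op_self (h : IsRightRack op inv) (w y : R) : op w (op y y) = op w y := by
  have := h.right_distrib (inv w y) y y
  rwa [h.op_inv, eq_comm] at this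

theorem op_inv_self (h : IsRightRack op inv) (w y : R) : op w (inv y y) = op w y := by
  rw [← h.op_op_self w (inv y y), h.op_self_inv_self]

theorem quandleOp_self (h : IsRightRack op inv) (x : R) : quandleOp op inv x x = x :=
  h.op_inv x x

theorem quandle (h : IsRightRack op inv) :
    IsRightRack (quandleOp op inv) (fun x y => op (inv x y) (inv x y)) where
  inv_op x y := by simp only [quandleOp, h.inv_op, h.op_self_inv_self]
  op_inv x y := by simp only [quandleOp, h.inv_self_op_self, h.op_inv]
  right_distrib x y z := by
    simp only [quandleOp, h.inv_self_op, ← h.right_distrib, h.op_inv_self]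

end IsRightRack

theorem stmt_12 {R : Type*} (op inv : R → R → R)
    (hinv₁ : ∀ x y, inv (op x y) y = x) (hinv₂ : ∀ x y, op (inv x y) y = x)
    (hdist : ∀ x y z, op (op x y) z = op (op x z) (op y z)) :
    (∀ x, quandleOp op inv x x = x) ∧
    (∀ y, Function.Bijective (fun x => quandleOp op inv x y)) ∧
    (∀ x y z, quandleOp op inv (quandleOp op inv x y) z
      = quandleOp op inv (quandleOp op inv x z) (quandleOp op inv y z)) := by
  have h : IsRightRack op inv := ⟨hinv₁, hinv₂, hdist⟩
  exact ⟨h.quandleOp_self, h.quandle.bijective_op_right, h.quandle.right_distrib⟩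
end

section
/- Let n ≥ 1 and let τ : ℤ^n → ℤ^n be the kink map of the rack (ℤ^n, ◁), i.e. τ(x) = x ◁ x. Then for all x ∈ ℤ^n and all 1 ≤ i ≤ n, τ(x)_i = (−1)^n x_i + 2(x_n − x_{n−1} + x_{n−2} − ⋯ + (−1)^{n−1} x_1); that is, τ(x)_i = (−1)^n x_i + 2·Σ_{j=1}^n (−1)^{n−j} x_j. -/
/- Each step `a ↦ 2 * b - a` negates the accumulator, so `y j` is negated once by each of the
`n - 1 - j` later steps. -/
theorem foldl_two_mul_sub_ofFn {R : Type*} [CommRing R] (n : ℕ) (y : Fin n → R) (a : R) :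
    (List.ofFn y).foldl (fun a b => 2 * b - a) a
      = (-1) ^ n * a + 2 * ∑ j : Fin n, (-1) ^ (n - 1 - (j : ℕ)) * y j := by
  induction n generalizing a with
  | zero => simp
  | succ n ih =>
    have hexp (j : Fin n) : n - (j.succ : ℕ) = n - 1 - j := by
      rw [Fin.val_succ]; omega
    rw [List.ofFn_succ, List.foldl_cons, ih, Fin.sum_univ_succ]
    simp only [Nat.add_sub_cancel, hexp, Fin.val_zero, Nat.sub_zero]
    ring

theorem stmt_15_general (n : ℕ) :
    ∀ (x : Fin n → ℤ) (i : Fin n),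
      tri n x x i
        = (-1 : ℤ) ^ n * x i + 2 * (∑ j : Fin n, (-1 : ℤ) ^ (n - 1 - (j : ℕ)) * x j) :=
  fun x i => foldl_two_mul_sub_ofFn n x (x i)

theorem stmt_15 (n : ℕ) (hn : 1 ≤ n) :
    ∀ (x : Fin n → ℤ) (i : Fin n),
      tri n x x i
        = (-1 : ℤ) ^ n * x i + 2 * (∑ j : Fin n, (-1 : ℤ) ^ (n - 1 - (j : ℕ)) * x j) :=
  stmt_15_general n
end

section
/- Let n ≥ 1 and let ∘ be the associated quandle operation of the rack (ℤ^n, ◁), given explicitly by (x ∘ y)_i = x_i + 2·Σ_{j=1}^n (−1)^{n−j+1} x_j + 2·Σ_{j=1}^n (−1)^{n−j} y_j. Then every connected subrack of (ℤ^n, ∘) (i.e. every connected subquandle of the associated quandle) has at most one element. -/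
/-- The associated quandle operation `∘` of the rack `(ℤ^n, ◁)`, given explicitly by
`(x ∘ y)_i = x_i + 2·Σ_j (−1)^{n−j+1} x_j + 2·Σ_j (−1)^{n−j} y_j` (1-indexed). -/
def qOp (n : ℕ) (x y : Fin n → ℤ) : Fin n → ℤ :=
  fun i => x i + 2 * (∑ j : Fin n, (-1 : ℤ) ^ (n - (j : ℕ)) * x j)
      + 2 * (∑ j : Fin n, (-1 : ℤ) ^ (n - (j : ℕ) - 1) * y j)

/-- `S` is a subrack: closed under the operation `op` and its inverse `inv`. -/
def IsSubrack {α : Type*} (op inv : α → α → α) (S : Set α) : Prop :=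
  ∀ x ∈ S, ∀ y ∈ S, op x y ∈ S ∧ inv x y ∈ S

/-- `S` is connected: any `v ∈ S` is obtained from any `u ∈ S` by finitely many
right translations `z ↦ op z s`, `z ↦ inv z s` with `s ∈ S`. -/
def IsConnectedSubrack {α : Type*} (op inv : α → α → α) (S : Set α) : Prop :=
  ∀ u ∈ S, ∀ v ∈ S,
    Relation.ReflTransGen (fun a b => ∃ s ∈ S, b = op a s ∨ b = inv a s) u v

/-- `M` is the maximal connected subrack containing `x`: a connected subrack
containing `x` that contains every connected subrack containing `x`. -/
def IsMaxConnSubrack {α : Type*} (op inv : α → α → α) (x : α) (M : Set α) : Prop :=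
  IsSubrack op inv M ∧ IsConnectedSubrack op inv M ∧ x ∈ M ∧
    ∀ S : Set α, IsSubrack op inv S → IsConnectedSubrack op inv S → x ∈ S → S ⊆ M

/-!
Since `x ∘ x = x` and `x ∘ y - x` is twice an integer linear form in `(x, y)`, agreement of all
coordinates modulo `m` gives `x ∘ y ≡ x` modulo `2m`. Residues invariant under all right
translations are constant on a connected subrack, so by induction any two elements of a connected
subrack agree modulo every power of `2`, hence are equal.
-/

open Finset

theorem IsConnectedSubrack.apply_eq_of_apply_op_eq {α β : Type*} {op inv : α → α → α}
    {S : Set α} (hconn : IsConnectedSubrack op inv S) (hsub : IsSubrack op inv S)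
    (hinv : ∀ x y, op (inv x y) y = x) (f : α → β)
    (hf : ∀ a ∈ S, ∀ s ∈ S, f (op a s) = f a) {u v : α} (hu : u ∈ S) (hv : v ∈ S) :
    f u = f v := by
  suffices ∀ w, Relation.ReflTransGen (fun a b => ∃ s ∈ S, b = op a s ∨ b = inv a s) u w →
      w ∈ S ∧ f w = f u from (this v (hconn u hu v hv)).2.symm
  intro w hw
  induction hw with
  | refl => exact ⟨hu, rfl⟩
  | @tail b _ _ hstep ih =>
    obtain ⟨hb, hfb⟩ := ih
    obtain ⟨s, hs, rfl | rfl⟩ := hstep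
    · exact ⟨(hsub b hb s hs).1, (hf b hb s hs).trans hfb⟩
    · have hc := (hsub b hb s hs).2
      exact ⟨hc, (hf _ hc s hs).symm.trans ((congrArg f (hinv b s)).trans hfb)⟩

theorem Int.eq_of_forall_modEq_two_pow {a b : ℤ} (h : ∀ k : ℕ, a ≡ b [ZMOD 2 ^ k]) : a = b := by
  have hdvd := (h (b - a).natAbs).dvd
  have hlt : (b - a).natAbs < ((2 : ℤ) ^ (b - a).natAbs).natAbs := by
    rw [Int.natAbs_pow]
    exact Nat.lt_two_pow_self
  linarith [Int.eq_zero_of_dvd_of_natAbs_lt_natAbs hdvd hlt]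

lemma neg_one_pow_sub_sub_one {n j : ℕ} (h : j < n) :
    (-1 : ℤ) ^ (n - j - 1) = -(-1) ^ (n - j) := by
  obtain ⟨k, hk⟩ : ∃ k, n - j = k + 1 := ⟨n - j - 1, by omega⟩
  rw [hk, Nat.add_sub_cancel, pow_succ]
  ring

theorem qOp_self (n : ℕ) (x : Fin n → ℤ) : qOp n x x = x := by
  funext i
  have hsum : ∑ j : Fin n, (-1 : ℤ) ^ (n - (j : ℕ) - 1) * x j
      = -∑ j : Fin n, (-1 : ℤ) ^ (n - (j : ℕ)) * x j := by
    rw [← sum_neg_distrib]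
    exact sum_congr rfl fun j _ => by rw [neg_one_pow_sub_sub_one j.isLt]; ring
  simp only [qOp, hsum]
  ring

theorem qOp_modEq_of_forall_modEq {n : ℕ} {m : ℤ} {x y : Fin n → ℤ}
    (h : ∀ j, x j ≡ y j [ZMOD m]) (i : Fin n) : qOp n x y i ≡ x i [ZMOD 2 * m] := by
  have hsum : ∑ j : Fin n, (-1 : ℤ) ^ (n - (j : ℕ)) * x j
      ≡ ∑ j : Fin n, (-1 : ℤ) ^ (n - (j : ℕ)) * y j [ZMOD m] :=
    Int.ModEq.sum fun j _ => (h j).mul_left _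
  have hself := congrFun (qOp_self n y) i
  simp only [qOp] at hself ⊢
  calc x i + 2 * (∑ j : Fin n, (-1 : ℤ) ^ (n - (j : ℕ)) * x j)
        + 2 * (∑ j : Fin n, (-1 : ℤ) ^ (n - (j : ℕ) - 1) * y j)
      = x i + 2 * ((∑ j : Fin n, (-1 : ℤ) ^ (n - (j : ℕ)) * x j)
        + ∑ j : Fin n, (-1 : ℤ) ^ (n - (j : ℕ) - 1) * y j) := by ring
    _ ≡ x i + 2 * ((∑ j : Fin n, (-1 : ℤ) ^ (n - (j : ℕ)) * y j)
        + ∑ j : Fin n, (-1 : ℤ) ^ (n - (j : ℕ) - 1) * y j) [ZMOD 2 * m] :=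
      ((hsum.add_right _).mul_left').add_left _
    _ = x i := by linarith

theorem modEq_two_pow_of_mem_connectedSubrack {n : ℕ}
    {inv : (Fin n → ℤ) → (Fin n → ℤ) → (Fin n → ℤ)} {S : Set (Fin n → ℤ)}
    (hsub : IsSubrack (qOp n) inv S) (hconn : IsConnectedSubrack (qOp n) inv S)
    (hinv : ∀ x y, qOp n (inv x y) y = x) (k : ℕ) {u v : Fin n → ℤ} (hu : u ∈ S) (hv : v ∈ S)
    (i : Fin n) : u i ≡ v i [ZMOD 2 ^ k] := by
  induction k generalizing u v i with
  | zero => rw [pow_zero]; exact Int.modEq_one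
  | succ k ih =>
    rw [pow_succ']
    exact hconn.apply_eq_of_apply_op_eq hsub hinv (fun z => z i % (2 * 2 ^ k))
      (fun a ha s hs => qOp_modEq_of_forall_modEq (fun j => ih ha hs j) i) hu hv

theorem stmt_17_general (n : ℕ)
    (inv : (Fin n → ℤ) → (Fin n → ℤ) → (Fin n → ℤ))
    (hinv₂ : ∀ x y, qOp n (inv x y) y = x)
    (S : Set (Fin n → ℤ))
    (hsub : IsSubrack (qOp n) inv S) (hconn : IsConnectedSubrack (qOp n) inv S) :
    S.Subsingleton := fun _ hu _ hv =>
  funext fun i => Int.eq_of_forall_modEq_two_pow fun k =>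
    modEq_two_pow_of_mem_connectedSubrack hsub hconn hinv₂ k hu hv i

theorem stmt_17 (n : ℕ) (hn : 1 ≤ n)
    (inv : (Fin n → ℤ) → (Fin n → ℤ) → (Fin n → ℤ))
    (hinv₁ : ∀ x y, inv (qOp n x y) y = x) (hinv₂ : ∀ x y, qOp n (inv x y) y = x)
    (S : Set (Fin n → ℤ))
    (hsub : IsSubrack (qOp n) inv S) (hconn : IsConnectedSubrack (qOp n) inv S) :
    S.Subsingleton :=
  stmt_17_general n inv hinv₂ S hsub hconn
end

section
/- Let (R, ∗) be a (right) rack, let ∗_Q be its associated quandle operation x ∗_Q y = (x ∗̄ x) ∗ y, and let τ(x) = x ∗ x be its kink map (a bijection of R, so its iterates τ^m are defined for all integers m). Fix x ∈ R. Suppose M is the maximal connected subrack of (R, ∗) containing x and M_Q is the maximal connected subrack of (R, ∗_Q) containing x. Then M = ⋃_{m ∈ ℤ} τ^m(M_Q). -/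
open Relation Equiv

section

variable {α β : Type*}

theorem Equiv.Perm.semiconj_zpow_apply {f : α → β} {σ : Perm α} {τ : Perm β}
    (h : ∀ a, f (σ a) = τ (f a)) (m : ℤ) (a : α) : f ((σ ^ m) a) = (τ ^ m) (f a) := by
  induction m using Int.induction_on generalizing a with
  | zero => simp
  | succ n ih => simp only [zpow_add_one, Perm.mul_apply, h, ih]
  | pred n ih =>
    have hinv : f (σ⁻¹ a) = τ⁻¹ (f a) := by
      rw [Perm.eq_inv_iff_eq, ← h]
      simp
    simp only [zpow_sub_one, Perm.mul_apply, hinv, ih]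

theorem Equiv.Perm.reflTransGen_zpow_apply {r : α → α → Prop} [Std.Symm r] {σ : Perm α}
    {a : α} (h : ∀ k : ℤ, r ((σ ^ k) a) (σ ((σ ^ k) a))) (m : ℤ) :
    ReflTransGen r a ((σ ^ m) a) := by
  have step (k : ℤ) : r ((σ ^ k) a) ((σ ^ (k + 1)) a) := by
    rw [add_comm, zpow_add, zpow_one, Perm.mul_apply]
    exact h k
  induction m using Int.induction_on with
  | zero => simpa using ReflTransGen.refl
  | succ n ih => exact ih.tail (step n)
  | pred n ih => exact ih.tail (Std.Symm.symm _ _ (by simpa using step (-n - 1)))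

def translationStep (op inv : α → α → α) (S : Set α) (a b : α) : Prop :=
  ∃ s ∈ S, b = op a s ∨ b = inv a s

theorem translationStep_symm {op inv : α → α → α} (h₁ : ∀ x y, inv (op x y) y = x)
    (h₂ : ∀ x y, op (inv x y) y = x) (S : Set α) : Std.Symm (translationStep op inv S) := by
  refine ⟨?_⟩
  rintro a b ⟨s, hs, rfl | rfl⟩
  · exact ⟨s, hs, Or.inr (h₁ a s).symm⟩
  · exact ⟨s, hs, Or.inl (h₂ a s).symm⟩

theorem IsSubrack.mem_of_reflTransGen {op inv : α → α → α} {S : Set α}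
    (hS : IsSubrack op inv S) {a b : α} (ha : a ∈ S)
    (hab : ReflTransGen (translationStep op inv S) a b) : b ∈ S := by
  induction hab with
  | refl => exact ha
  | tail _ hbc ih =>
    obtain ⟨s, hs, rfl | rfl⟩ := hbc
    exacts [(hS _ ih s hs).1, (hS _ ih s hs).2]

end

structure IsRightRack_s18 {R : Type*} (op inv : R → R → R) : Prop where
  inv_op : ∀ x y, inv (op x y) y = x
  op_inv : ∀ x y, op (inv x y) y = x
  op_op : ∀ x y z, op (op x y) z = op (op x z) (op y z)

namespace IsRightRack_s18

variable {R : Type*} {op inv invQ : R → R → R} {e : Perm R}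

theorem kink_op (h : IsRightRack_s18 op inv) (he : ∀ x, e x = op x x) (z y : R) :
    e (op z y) = op (e z) y := by
  rw [he, he, h.op_op z z y]

theorem kink_inv (h : IsRightRack_s18 op inv) (he : ∀ x, e x = op x x) (z y : R) :
    e (inv z y) = inv (e z) y := by
  rw [← h.inv_op (e (inv z y)) y, ← h.kink_op he, h.op_inv]

theorem op_kink (h : IsRightRack_s18 op inv) (he : ∀ x, e x = op x x) (w s : R) :
    op w (e s) = op w s := by
  simpa [he, h.op_inv] using (h.op_op (inv w s) s s).symm

theorem inv_kink (h : IsRightRack_s18 op inv) (he : ∀ x, e x = op x x) (w s : R) :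
    inv w (e s) = inv w s := by
  conv_lhs => rw [← h.op_inv w s, ← h.op_kink he, h.inv_op]

theorem kink_zpow_op (h : IsRightRack_s18 op inv) (he : ∀ x, e x = op x x) (m : ℤ) (z y : R) :
    (e ^ m) (op z y) = op ((e ^ m) z) y :=
  (Perm.semiconj_zpow_apply (f := (op · y)) (fun z => (h.kink_op he z y).symm) m z).symm

theorem kink_zpow_inv (h : IsRightRack_s18 op inv) (he : ∀ x, e x = op x x) (m : ℤ) (z y : R) :
    (e ^ m) (inv z y) = inv ((e ^ m) z) y :=
  (Perm.semiconj_zpow_apply (f := (inv · y)) (fun z => (h.kink_inv he z y).symm) m z).symm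

theorem op_kink_zpow_right (h : IsRightRack_s18 op inv) (he : ∀ x, e x = op x x) (w : R) (m : ℤ)
    (s : R) : op w ((e ^ m) s) = op w s := by
  simpa using Perm.semiconj_zpow_apply (τ := 1) (fun s => h.op_kink he w s) m s

theorem inv_kink_zpow_right (h : IsRightRack_s18 op inv) (he : ∀ x, e x = op x x) (w : R) (m : ℤ)
    (s : R) : inv w ((e ^ m) s) = inv w s := by
  simpa using Perm.semiconj_zpow_apply (τ := 1) (fun s => h.inv_kink he w s) m s

theorem kink_quandleOp (h : IsRightRack_s18 op inv) (he : ∀ x, e x = op x x) (z s : R) :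
    e (quandleOp op inv z s) = op z s := by
  rw [quandleOp, h.kink_op he, h.kink_inv he, he, h.inv_op]

theorem quandleInv_eq (h : IsRightRack_s18 op inv) (he : ∀ x, e x = op x x)
    (hinvQ : ∀ x y, invQ (quandleOp op inv x y) y = x) (z s : R) :
    invQ z s = e (inv z s) := by
  have hz : quandleOp op inv (e (inv z s)) s = z :=
    e.injective (by rw [h.kink_quandleOp he, ← h.kink_op he, h.op_inv])
  exact (congrArg (invQ · s) hz).symm.trans (hinvQ _ _)

theorem op_kink_zpow_left (h : IsRightRack_s18 op inv) (he : ∀ x, e x = op x x) (m : ℤ) (u s : R) :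
    op ((e ^ m) u) s = (e ^ (m + 1)) (quandleOp op inv u s) := by
  rw [zpow_add_one, Perm.mul_apply, h.kink_quandleOp he, h.kink_zpow_op he]

theorem inv_kink_zpow_left (h : IsRightRack_s18 op inv) (he : ∀ x, e x = op x x)
    (hinvQ : ∀ x y, invQ (quandleOp op inv x y) y = x) (m : ℤ) (u s : R) :
    inv ((e ^ m) u) s = (e ^ (m - 1)) (invQ u s) := by
  rw [h.quandleInv_eq he hinvQ, ← Perm.mul_apply, ← zpow_add_one, sub_add_cancel,
    h.kink_zpow_inv he]

theorem quandleOp_kink_zpow_right (h : IsRightRack_s18 op inv) (he : ∀ x, e x = op x x) (z : R)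
    (m : ℤ) (s : R) : quandleOp op inv z ((e ^ m) s) = quandleOp op inv z s :=
  h.op_kink_zpow_right he (inv z z) m s

theorem quandleInv_kink_zpow_right (h : IsRightRack_s18 op inv) (he : ∀ x, e x = op x x)
    (hinvQ : ∀ x y, invQ (quandleOp op inv x y) y = x) (z : R) (m : ℤ) (s : R) :
    invQ z ((e ^ m) s) = invQ z s := by
  rw [h.quandleInv_eq he hinvQ, h.quandleInv_eq he hinvQ, h.inv_kink_zpow_right he]

theorem isSubrack_quandle (h : IsRightRack_s18 op inv) (he : ∀ x, e x = op x x)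
    (hinvQ : ∀ x y, invQ (quandleOp op inv x y) y = x) {T : Set R} (hT : IsSubrack op inv T) :
    IsSubrack (quandleOp op inv) invQ T := by
  intro a ha s hs
  have has : inv a s ∈ T := (hT a ha s hs).2
  refine ⟨(hT _ (hT a ha a ha).2 s hs).1, ?_⟩
  rw [h.quandleInv_eq he hinvQ, he]
  exact (hT _ has _ has).1

theorem reflTransGen_of_reflTransGen_quandle (h : IsRightRack_s18 op inv) (he : ∀ x, e x = op x x)
    (hinvQ : ∀ x y, invQ (quandleOp op inv x y) y = x) {T : Set R} (hT : IsSubrack op inv T)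
    {a b : R} (ha : a ∈ T) (hab : ReflTransGen (translationStep (quandleOp op inv) invQ T) a b) :
    ReflTransGen (translationStep op inv T) a b := by
  induction hab with
  | refl => exact .refl
  | @tail b c hab hbc ih =>
    have hb : b ∈ T := (h.isSubrack_quandle he hinvQ hT).mem_of_reflTransGen ha hab
    obtain ⟨s, hs, rfl | rfl⟩ := hbc
    · exact (ih.tail ⟨b, hb, Or.inr rfl⟩).tail ⟨s, hs, Or.inl rfl⟩
    · -- `b ∗̄_Q s = τ (b ∗̄ s) = (b ∗̄ s) ∗ (b ∗̄ s)`
      rw [h.quandleInv_eq he hinvQ, he]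
      exact (ih.tail ⟨s, hs, Or.inr rfl⟩).tail ⟨_, (hT b hb s hs).2, Or.inl rfl⟩

theorem isSubrack_iUnion_zpow_image (h : IsRightRack_s18 op inv) (he : ∀ x, e x = op x x)
    (hinvQ : ∀ x y, invQ (quandleOp op inv x y) y = x) {S : Set R}
    (hS : IsSubrack (quandleOp op inv) invQ S) : IsSubrack op inv (⋃ m : ℤ, (e ^ m) '' S) := by
  intro a ha b hb
  obtain ⟨m, u, hu, rfl⟩ := Set.mem_iUnion.1 ha
  obtain ⟨k, v, hv, rfl⟩ := Set.mem_iUnion.1 hb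
  rw [h.op_kink_zpow_right he, h.inv_kink_zpow_right he, h.op_kink_zpow_left he,
    h.inv_kink_zpow_left he hinvQ]
  exact ⟨Set.mem_iUnion.2 ⟨m + 1, _, (hS u hu v hv).1, rfl⟩,
    Set.mem_iUnion.2 ⟨m - 1, _, (hS u hu v hv).2, rfl⟩⟩

theorem isConnectedSubrack_iUnion_zpow_image (h : IsRightRack_s18 op inv) (he : ∀ x, e x = op x x)
    (hinvQ : ∀ x y, invQ (quandleOp op inv x y) y = x) {S : Set R}
    (hS : IsSubrack (quandleOp op inv) invQ S)
    (hSc : IsConnectedSubrack (quandleOp op inv) invQ S) :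
    IsConnectedSubrack op inv (⋃ m : ℤ, (e ^ m) '' S) := by
  set N := ⋃ m : ℤ, (e ^ m) '' S
  have hN : IsSubrack op inv N := h.isSubrack_iUnion_zpow_image he hinvQ hS
  have hSN : S ⊆ N := fun u hu => Set.mem_iUnion.2 ⟨0, u, hu, by simp⟩
  have := translationStep_symm h.inv_op h.op_inv N
  have orbit (u : R) (hu : u ∈ S) (m : ℤ) :
      ReflTransGen (translationStep op inv N) u ((e ^ m) u) :=
    Perm.reflTransGen_zpow_apply
      (fun k => ⟨(e ^ k) u, Set.mem_iUnion.2 ⟨k, u, hu, rfl⟩, Or.inl (he _)⟩) m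
  intro a ha b hb
  obtain ⟨m, u, hu, rfl⟩ := Set.mem_iUnion.1 ha
  obtain ⟨k, v, hv, rfl⟩ := Set.mem_iUnion.1 hb
  have huv : ReflTransGen (translationStep op inv N) u v :=
    h.reflTransGen_of_reflTransGen_quandle he hinvQ hN (hSN hu)
      (ReflTransGen.mono (fun _ _ ⟨s, hs, hab⟩ => ⟨s, hSN hs, hab⟩) _ _ (hSc u hu v hv))
  exact ((Std.Symm.symm _ _ (orbit u hu m)).trans huv).trans (orbit v hv k)

theorem mem_iUnion_zpow_image_of_reflTransGen (h : IsRightRack_s18 op inv) (he : ∀ x, e x = op x x)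
    (hinvQ : ∀ x y, invQ (quandleOp op inv x y) y = x) {T : Set R} {x v : R}
    (hv : ReflTransGen (translationStep op inv T) x v) :
    v ∈ ⋃ m : ℤ,
      (e ^ m) '' {u | ReflTransGen (translationStep (quandleOp op inv) invQ T) x u} := by
  induction hv with
  | refl => exact Set.mem_iUnion.2 ⟨0, x, .refl, by simp⟩
  | tail _ hbc ih =>
    obtain ⟨m, u, hu, rfl⟩ := Set.mem_iUnion.1 ih
    obtain ⟨s, hs, rfl | rfl⟩ := hbc
    · rw [h.op_kink_zpow_left he]
      exact Set.mem_iUnion.2 ⟨m + 1, _, hu.tail ⟨s, hs, Or.inl rfl⟩, rfl⟩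
    · rw [h.inv_kink_zpow_left he hinvQ]
      exact Set.mem_iUnion.2 ⟨m - 1, _, hu.tail ⟨s, hs, Or.inr rfl⟩, rfl⟩

theorem translationStep_quandle_of_subset (h : IsRightRack_s18 op inv) (he : ∀ x, e x = op x x)
    (hinvQ : ∀ x y, invQ (quandleOp op inv x y) y = x) {T T' : Set R}
    (hT : T ⊆ ⋃ m : ℤ, (e ^ m) '' T') {a b : R}
    (hab : translationStep (quandleOp op inv) invQ T a b) :
    translationStep (quandleOp op inv) invQ T' a b := by
  obtain ⟨s, hs, hb⟩ := hab
  obtain ⟨m, t, ht, rfl⟩ := Set.mem_iUnion.1 (hT hs)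
  refine ⟨t, ht, ?_⟩
  rwa [h.quandleOp_kink_zpow_right he, h.quandleInv_kink_zpow_right he hinvQ] at hb

theorem subset_iUnion_zpow_image (h : IsRightRack_s18 op inv) (he : ∀ x, e x = op x x)
    (hinvQ₁ : ∀ x y, invQ (quandleOp op inv x y) y = x)
    (hinvQ₂ : ∀ x y, quandleOp op inv (invQ x y) y = x) {x : R} {M MQ : Set R}
    (hM : IsSubrack op inv M) (hMc : IsConnectedSubrack op inv M) (hxM : x ∈ M)
    (hMQ : IsMaxConnSubrack (quandleOp op inv) invQ x MQ) : M ⊆ ⋃ m : ℤ, (e ^ m) '' MQ := by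
  set SQ := {u | ReflTransGen (translationStep (quandleOp op inv) invQ M) x u}
  have hSQM : SQ ⊆ M := fun _ hu =>
    (h.isSubrack_quandle he hinvQ₁ hM).mem_of_reflTransGen hxM hu
  have hMSQ : M ⊆ ⋃ m : ℤ, (e ^ m) '' SQ := fun v hv =>
    h.mem_iUnion_zpow_image_of_reflTransGen he hinvQ₁ (hMc x hxM v hv)
  have hSQ : IsSubrack (quandleOp op inv) invQ SQ := fun u hu v hv =>
    ⟨hu.tail ⟨v, hSQM hv, Or.inl rfl⟩, hu.tail ⟨v, hSQM hv, Or.inr rfl⟩⟩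
  have hSQc : IsConnectedSubrack (quandleOp op inv) invQ SQ := by
    have := translationStep_symm hinvQ₁ hinvQ₂ SQ
    have hx (u : R) (hu : u ∈ SQ) :
        ReflTransGen (translationStep (quandleOp op inv) invQ SQ) x u :=
      ReflTransGen.mono (fun _ _ => h.translationStep_quandle_of_subset he hinvQ₁ hMSQ) _ _ hu
    exact fun u hu v hv => (Std.Symm.symm _ _ (hx u hu)).trans (hx v hv)
  exact hMSQ.trans <| Set.iUnion_mono fun m =>
    Set.image_mono (hMQ.2.2.2 SQ hSQ hSQc ReflTransGen.refl)

end IsRightRack_s18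

theorem stmt_18 {R : Type*} (op inv : R → R → R)
    (hinv₁ : ∀ x y, inv (op x y) y = x) (hinv₂ : ∀ x y, op (inv x y) y = x)
    (hdist : ∀ x y z, op (op x y) z = op (op x z) (op y z))
    (invQ : R → R → R)
    (hinvQ₁ : ∀ x y, invQ (quandleOp op inv x y) y = x)
    (hinvQ₂ : ∀ x y, quandleOp op inv (invQ x y) y = x)
    (e : Equiv.Perm R) (he : ∀ x, e x = op x x)
    (x : R) (M MQ : Set R)
    (hM : IsMaxConnSubrack op inv x M)
    (hMQ : IsMaxConnSubrack (quandleOp op inv) invQ x MQ) :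
    M = ⋃ m : ℤ, (e ^ m) '' MQ := by
  have h : IsRightRack_s18 op inv := ⟨hinv₁, hinv₂, hdist⟩
  obtain ⟨hMsub, hMconn, hxM, hMmax⟩ := hM
  refine (h.subset_iUnion_zpow_image he hinvQ₁ hinvQ₂ hMsub hMconn hxM hMQ).antisymm
    (hMmax _ ?_ ?_ ?_)
  · exact h.isSubrack_iUnion_zpow_image he hinvQ₁ hMQ.1
  · exact h.isConnectedSubrack_iUnion_zpow_image he hinvQ₁ hMQ.1 hMQ.2.1
  · exact Set.mem_iUnion.2 ⟨0, x, hMQ.2.2.1, by simp⟩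
end
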